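/- Let (L, Q_1, …, Q_n, R) be a (4,c)-flexipath with n ≥ 3. Then c ≤ 2. -/

import Mathlib

open Set

namespace Matroid

variable {α : Type*}

/-- The rank of a set in a matroid: the supremum of the cardinalities of its
independent subsets. -/
noncomputable def rFun (M : Matroid α) (X : Set α) : ℕ :=
  sSup {n | ∃ I ⊆ X, M.Indep I ∧ I.ncard = n}

/-- The connectivity function λ of a matroid. -/
noncomputable def conn (M : Matroid α) (A : Set α) : ℤ :=
  (M.rFun A : ℤ) + M.rFun (M.E \ A) - M.rFun M.E

/-- The local connectivity ⊓(X,Y) = r(X) + r(Y) - r(X ∪ Y). -/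
noncomputable def localConn (M : Matroid α) (X Y : Set α) : ℤ :=
  (M.rFun X : ℤ) + M.rFun Y - M.rFun (X ∪ Y)

/-- The local coconnectivity ⊓*(X,Y): the local connectivity in the dual matroid. -/
noncomputable def localCoconn (M : Matroid α) (X Y : Set α) : ℤ :=
  M✶.localConn X Y

/-- `(L, Q 0, ..., Q (n-1), R)` is a path of 4-separations in `M`: it is an ordered
partition of the ground set, κ(L,R) = 3 (the minimum of λ over sets sandwiched between
`L` and `E \ R` is 3; since λ(L) = 3 is among the `steps` conditions, it suffices to
require that 3 is a lower bound), and every initial union is exactly 3-separating. -/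
structure Is4Path (M : Matroid α) (L R : Set α) {n : ℕ} (Q : Fin n → Set α) : Prop where
  ground_eq : L ∪ (⋃ i, Q i) ∪ R = M.E
  disj_LR : Disjoint L R
  disj_LQ : ∀ i, Disjoint L (Q i)
  disj_RQ : ∀ i, Disjoint R (Q i)
  disj_QQ : ∀ i j, i ≠ j → Disjoint (Q i) (Q j)
  nonempty_L : L.Nonempty
  nonempty_R : R.Nonempty
  nonempty_Q : ∀ i, (Q i).Nonempty
  kappa_ge : ∀ Z, L ⊆ Z → Z ⊆ M.E \ R → 3 ≤ M.conn Z
  steps : ∀ k ≤ n, M.conn (L ∪ ⋃ i ∈ {i : Fin n | (i : ℕ) < k}, Q i) = 3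

/-- A 4-flexipath: every permutation of the internal steps yields a path of
4-separations. -/
def Is4Flexipath (M : Matroid α) (L R : Set α) {n : ℕ} (Q : Fin n → Set α) : Prop :=
  ∀ σ : Equiv.Perm (Fin n), Is4Path M L R (Q ∘ σ)

/-- A `(4,c)`-flexipath: a 4-flexipath with λ(Q i) = c for all `i` and
λ(Q i ∪ Q j) > c for all distinct `i`, `j`. -/
structure Is4cFlexipath (M : Matroid α) (c : ℤ) (L R : Set α) {n : ℕ}
    (Q : Fin n → Set α) : Prop where
  flexi : Is4Flexipath M L R Q
  conn_step : ∀ i, M.conn (Q i) = c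
  conn_two_steps : ∀ i j, i ≠ j → c < M.conn (Q i ∪ Q j)


section Aux
variable {M : Matroid α}

lemma rFun_eq_ncard_of_basis' [M.Finite] {I X : Set α} (hI : M.IsBasis' I X) :
    M.rFun X = I.ncard := by
  have hub : ∀ n ∈ {n | ∃ J ⊆ X, M.Indep J ∧ J.ncard = n}, n ≤ I.ncard := by
    rintro n ⟨J, hJX, hJ, rfl⟩
    obtain ⟨K, hK, hJK⟩ := hJ.subset_isBasis'_of_subset hJX
    have h1 : J.encard ≤ I.encard := by
      rw [← hK.encard_eq_encard hI]
      exact encard_mono hJK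
    rw [ncard_def, ncard_def]
    exact ENat.toNat_le_toNat h1 hI.indep.finite.encard_lt_top.ne
  exact IsGreatest.csSup_eq ⟨⟨I, hI.subset, hI.indep, rfl⟩, hub⟩

lemma rFun_eq_ncard_of_basis [M.Finite] {I X : Set α} (hI : M.IsBasis I X) :
    M.rFun X = I.ncard := rFun_eq_ncard_of_basis' hI.isBasis'

lemma ncard_le_rFun [M.Finite] {J X : Set α} (hJ : M.Indep J) (hJX : J ⊆ X) :
    J.ncard ≤ M.rFun X := by
  obtain ⟨K, hK, hJK⟩ := hJ.subset_isBasis'_of_subset hJX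
  rw [rFun_eq_ncard_of_basis' hK]
  exact ncard_le_ncard hJK hK.indep.finite

lemma rFun_submod [M.Finite] {X Y : Set α} (hX : X ⊆ M.E) (hY : Y ⊆ M.E) :
    M.rFun (X ∪ Y) + M.rFun (X ∩ Y) ≤ M.rFun X + M.rFun Y := by
  obtain ⟨I, hI⟩ := M.exists_isBasis (X ∩ Y) (inter_subset_left.trans hX)
  obtain ⟨J, hJ, hIJ⟩ := hI.exists_isBasis_inter_eq_of_superset
    (inter_subset_left.trans subset_union_left) (union_subset hX hY)
  have hJfin : J.Finite := hJ.indep.finite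
  have hu : (J ∩ X) ∪ (J ∩ Y) = J := by
    rw [← inter_union_distrib_left, inter_eq_left.mpr hJ.subset]
  have hi : (J ∩ X) ∩ (J ∩ Y) = I := by
    rw [← hIJ]; ext x; simp only [mem_inter_iff]; tauto
  have hcount := ncard_union_add_ncard_inter (J ∩ X) (J ∩ Y)
    (hJfin.subset inter_subset_left) (hJfin.subset inter_subset_left)
  rw [hu, hi] at hcount
  have h1 : (J ∩ X).ncard ≤ M.rFun X :=
    ncard_le_rFun (hJ.indep.subset inter_subset_left) inter_subset_right
  have h2 : (J ∩ Y).ncard ≤ M.rFun Y :=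
    ncard_le_rFun (hJ.indep.subset inter_subset_left) inter_subset_right
  rw [rFun_eq_ncard_of_basis hJ, rFun_eq_ncard_of_basis hI]
  omega

lemma conn_compl [M.Finite] {X : Set α} (hX : X ⊆ M.E) :
    M.conn (M.E \ X) = M.conn X := by
  unfold conn
  rw [diff_diff_cancel_left hX]
  ring

lemma conn_submod [M.Finite] {A B : Set α} (hA : A ⊆ M.E) (hB : B ⊆ M.E) :
    M.conn (A ∪ B) + M.conn (A ∩ B) ≤ M.conn A + M.conn B := by
  have h1 := rFun_submod (M := M) hA hB
  have h2 := rFun_submod (M := M) (diff_subset (s := M.E) (t := A))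
    (diff_subset (s := M.E) (t := B))
  have e1 : M.E \ A ∪ M.E \ B = M.E \ (A ∩ B) := (diff_inter).symm
  have e2 : (M.E \ A) ∩ (M.E \ B) = M.E \ (A ∪ B) := diff_inter_diff
  rw [e1, e2] at h2
  unfold conn
  linarith

end Aux

theorem c_le_two_of_three_steps (M : Matroid α) [M.Finite] {n : ℕ}
    (hn : 3 ≤ n) (c : ℤ) (L R : Set α) (Q : Fin n → Set α)
    (h : Is4cFlexipath M c L R Q) :
    c ≤ 2 := by
  classical
  have h0 : 0 < n := by omega
  have h1 : 1 < n := by omega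
  have h2 : 2 < n := by omega
  set i0 : Fin n := ⟨0, h0⟩ with hi0
  set i1 : Fin n := ⟨1, h1⟩ with hi1
  set i2 : Fin n := ⟨2, h2⟩ with hi2
  have P : Is4Path M L R Q := h.flexi (Equiv.refl _)
  have hE := P.ground_eq
  have hLE : L ⊆ M.E := by
    rw [← hE]; exact subset_union_left.trans subset_union_left
  have hQE : ∀ i, Q i ⊆ M.E := fun i => by
    rw [← hE]
    exact ((subset_iUnion Q i).trans subset_union_right).trans subset_union_left
  -- disjointness facts
  have hne02 : i0 ≠ i2 := by simp [hi0, hi1, hi2, Fin.ext_iff]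
  have hne01 : i0 ≠ i1 := by simp [hi0, hi1, hi2, Fin.ext_iff]
  have hne20 : i2 ≠ i0 := by simp [hi0, hi1, hi2, Fin.ext_iff]
  have hne21 : i2 ≠ i1 := by simp [hi0, hi1, hi2, Fin.ext_iff]
  have hL0 : ∀ x ∈ L, x ∉ Q i0 := fun x hx => disjoint_left.mp (P.disj_LQ i0) hx
  have hL1 : ∀ x ∈ L, x ∉ Q i1 := fun x hx => disjoint_left.mp (P.disj_LQ i1) hx
  have hL2 : ∀ x ∈ L, x ∉ Q i2 := fun x hx => disjoint_left.mp (P.disj_LQ i2) hx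
  have hQ20 : ∀ x ∈ Q i2, x ∉ Q i0 :=
    fun x hx => disjoint_left.mp (P.disj_QQ i2 i0 hne20) hx
  have hQ21 : ∀ x ∈ Q i2, x ∉ Q i1 :=
    fun x hx => disjoint_left.mp (P.disj_QQ i2 i1 hne21) hx
  -- step value: conn (L ∪ (Q i0 ∪ Q i1)) = 3
  have s2 : M.conn (L ∪ (Q i0 ∪ Q i1)) = 3 := by
    have hs := P.steps 2 (by omega)
    have hset : {i : Fin n | (i : ℕ) < 2} = {i0, i1} := by
      ext i
      simp only [mem_setOf_eq, mem_insert_iff, mem_singleton_iff, Fin.ext_iff, hi0, hi1]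
      omega
    rw [hset, biUnion_pair] at hs
    exact hs
  -- step value: conn (L ∪ Q i2) = 3
  have s1 : M.conn (L ∪ Q i2) = 3 := by
    have hs := (h.flexi (Equiv.swap i0 i2)).steps 1 (by omega)
    have hset : {i : Fin n | (i : ℕ) < 1} = {i0} := by
      ext i
      simp only [mem_setOf_eq, mem_singleton_iff, Fin.ext_iff, hi0]
      omega
    rw [hset, biUnion_singleton] at hs
    simp only [Function.comp_apply, Equiv.swap_apply_left] at hs
    exact hs
  set A : Set α := L ∪ Q i2 with hA
  set B : Set α := M.E \ (L ∪ (Q i0 ∪ Q i1)) with hB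
  have hAE : A ⊆ M.E := union_subset hLE (hQE i2)
  have hBE : B ⊆ M.E := diff_subset
  have hBconn : M.conn B = 3 := by
    rw [hB, conn_compl (union_subset hLE (union_subset (hQE i0) (hQE i1)))]
    exact s2
  have hABu : A ∪ B = M.E \ (Q i0 ∪ Q i1) := by
    ext x
    simp only [hA, hB, mem_union, mem_diff]
    constructor
    · rintro ((hx | hx) | ⟨hxE, hx⟩)
      · exact ⟨hLE hx, fun h' => h'.elim (hL0 x hx) (hL1 x hx)⟩
      · exact ⟨hQE i2 hx, fun h' => h'.elim (hQ20 x hx) (hQ21 x hx)⟩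
      · exact ⟨hxE, fun h' => hx (Or.inr h')⟩
    · rintro ⟨hxE, hx⟩
      by_cases hxL : x ∈ L
      · exact Or.inl (Or.inl hxL)
      · exact Or.inr ⟨hxE, fun h' => h'.elim hxL hx⟩
  have hABi : A ∩ B = Q i2 := by
    ext x
    simp only [hA, hB, mem_inter_iff, mem_union, mem_diff]
    constructor
    · rintro ⟨hx | hx, hxE, hx'⟩
      · exact absurd (Or.inl hx) hx'
      · exact hx
    · intro hx
      exact ⟨Or.inr hx, hQE i2 hx,
        fun h' => h'.elim (fun hL => hL2 x hL hx)
          (fun h'' => h''.elim (hQ20 x hx) (hQ21 x hx))⟩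
  have key := conn_submod (M := M) hAE hBE
  rw [hABu, hABi, s1, hBconn,
    conn_compl (union_subset (hQE i0) (hQE i1))] at key
  have hgt := h.conn_two_steps i0 i1 hne01
  have hc := h.conn_step i2
  rw [hc] at key
  linarith

end Matroid
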